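/- Let r > 0, let d be a real number, and let h be a real symmetric 2×2 matrix. Set C = (cosh(r)/2) I₂ and S = (sinh(r)/2) σ_z. Then the inequality det C + d² · det(C + h) − 2 d · det S ≤ 4 d² · det( γ_TMSS,r + (0 ⊕ h) ) + 1/4 holds if and only if 4 d² det h ≥ (d + 1)². (Applied with d = det f and h = (f S_B)⁻¹ g ((f S_B)⁻¹)ᵀ, so that d² det h = det g, this gives the channel separability condition 4 det g ≥ (det f + 1)².) -/

import Mathlib

open Matrix

/-- Direct sum of two real 2×2 matrices, as a 4×4 (block) matrix. -/
noncomputable def dsum (A B : Matrix (Fin 2) (Fin 2) ℝ) :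
    Matrix (Fin 2 ⊕ Fin 2) (Fin 2 ⊕ Fin 2) ℝ :=
  Matrix.fromBlocks A 0 0 B

/-- The Pauli-z matrix σ_z = diag(1, -1). -/
noncomputable def sigmaZ : Matrix (Fin 2) (Fin 2) ℝ := !![1, 0; 0, -1]

/-- Covariance matrix of the two-mode squeezed state with squeezing `r`. -/
noncomputable def tmss (r : ℝ) : Matrix (Fin 2 ⊕ Fin 2) (Fin 2 ⊕ Fin 2) ℝ :=
  (1/2 : ℝ) • Matrix.fromBlocks
    (Real.cosh r • (1 : Matrix (Fin 2) (Fin 2) ℝ)) (Real.sinh r • sigmaZ)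
    (Real.sinh r • sigmaZ) (Real.cosh r • (1 : Matrix (Fin 2) (Fin 2) ℝ))

/-- Separability condition det α + det β − 2 det γ ≤ 4 det σ + 1/4
for a 4×4 covariance matrix σ with blocks [[α, γ],[γᵀ, β]]. -/
def sepCond (σ : Matrix (Fin 2 ⊕ Fin 2) (Fin 2 ⊕ Fin 2) ℝ) : Prop :=
  (σ.toBlocks₁₁).det + (σ.toBlocks₂₂).det - 2 * (σ.toBlocks₁₂).det ≤ 4 * σ.det + 1/4

/-- Physicality (Robertson–Schrödinger) condition det α + det β + 2 det γ ≤ 4 det σ + 1/4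
for a 4×4 covariance matrix σ with blocks [[α, γ],[γᵀ, β]]. -/
def physCond (σ : Matrix (Fin 2 ⊕ Fin 2) (Fin 2 ⊕ Fin 2) ℝ) : Prop :=
  (σ.toBlocks₁₁).det + (σ.toBlocks₂₂).det + 2 * (σ.toBlocks₁₂).det ≤ 4 * σ.det + 1/4

/-! The upper-left block of `tmss r + dsum 0 h` is scalar and `sigmaZ * sigmaZ = 1`, so its Schur
complement is the scalar shift `(2 cosh r)⁻¹ • 1 + h`, and every determinant in the inequality is
a polynomial in `cosh r`, `sinh r`, `tr h` and `det h`. With `cosh² r - sinh² r = 1` the right side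
minus the left side collapses to `sinh² r / 4 * (4 d² det h - (d + 1)²)`, whose sign is that of the
second factor because `sinh r ≠ 0` for `r > 0`. -/

namespace Matrix

variable {m n α : Type*} [Fintype m] [DecidableEq m] [Fintype n] [DecidableEq n] [Field α]

theorem det_fromBlocks_smul_one₁₁ {a : α} (ha : a ≠ 0) (B : Matrix m n α) (C : Matrix n m α)
    (D : Matrix n n α) :
    (fromBlocks (a • 1) B C D).det = a ^ Fintype.card m * (D - a⁻¹ • (C * B)).det := by
  have hfactor :
      fromBlocks (a • 1) B C D = fromBlocks (a • 1) 0 0 1 * fromBlocks 1 (a⁻¹ • B) C D := by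
    rw [fromBlocks_multiply]
    simp [smul_smul, ha]
  rw [hfactor, det_mul, det_fromBlocks_zero₂₁, det_fromBlocks_one₁₁, det_smul, det_one, det_one,
    mul_one, mul_one, Matrix.mul_smul]

theorem det_smul_one_add_fin_two {R : Type*} [CommRing R] (a : R) (A : Matrix (Fin 2) (Fin 2) R) :
    (a • 1 + A).det = a ^ 2 + a * A.trace + A.det := by
  simp [det_fin_two, trace_fin_two]
  ring

end Matrix

open Matrix

theorem sigmaZ_mul_self : sigmaZ * sigmaZ = 1 := by
  simp [sigmaZ, one_fin_two]

theorem det_sigmaZ : sigmaZ.det = -1 := by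
  simp [sigmaZ]

theorem tmss_add_dsum_zero (r : ℝ) (h : Matrix (Fin 2) (Fin 2) ℝ) :
    tmss r + dsum 0 h =
      fromBlocks ((Real.cosh r / 2) • 1) ((Real.sinh r / 2) • sigmaZ)
        ((Real.sinh r / 2) • sigmaZ) ((Real.cosh r / 2) • 1 + h) := by
  rw [tmss, dsum, fromBlocks_smul, fromBlocks_add]
  simp only [smul_smul, add_zero]
  congr 1 <;> ring_nf

theorem det_tmss_add_dsum_zero (r : ℝ) (h : Matrix (Fin 2) (Fin 2) ℝ) :
    (tmss r + dsum 0 h).det =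
      1 / 16 + Real.cosh r * h.trace / 8 + Real.cosh r ^ 2 / 4 * h.det := by
  have hc : Real.cosh r / 2 ≠ 0 := by positivity
  have hschur : (Real.cosh r / 2) • 1 + h - (Real.cosh r / 2)⁻¹ •
      ((Real.sinh r / 2) • sigmaZ * (Real.sinh r / 2) • sigmaZ) = (2 * Real.cosh r)⁻¹ • 1 + h := by
    rw [smul_mul_smul_comm, sigmaZ_mul_self, smul_smul, add_sub_right_comm, ← sub_smul]
    congr 2
    field_simp
    linear_combination Real.cosh_sq r
  rw [tmss_add_dsum_zero, det_fromBlocks_smul_one₁₁ hc, hschur, det_smul_one_add_fin_two,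
    Fintype.card_fin]
  field_simp
  ring

theorem stmt8_general (r : ℝ) (hr : 0 < r) (d : ℝ) (h : Matrix (Fin 2) (Fin 2) ℝ) :
    ((Real.cosh r / 2) • (1 : Matrix (Fin 2) (Fin 2) ℝ)).det +
        d ^ 2 * ((Real.cosh r / 2) • (1 : Matrix (Fin 2) (Fin 2) ℝ) + h).det -
        2 * d * ((Real.sinh r / 2) • sigmaZ).det ≤
      4 * d ^ 2 * (tmss r + dsum 0 h).det + 1/4
    ↔ 4 * d ^ 2 * h.det ≥ (d + 1) ^ 2 := by
  have hgap : 4 * d ^ 2 * (tmss r + dsum 0 h).det + 1/4 -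
      (((Real.cosh r / 2) • (1 : Matrix (Fin 2) (Fin 2) ℝ)).det +
        d ^ 2 * ((Real.cosh r / 2) • (1 : Matrix (Fin 2) (Fin 2) ℝ) + h).det -
        2 * d * ((Real.sinh r / 2) • sigmaZ).det) =
      Real.sinh r ^ 2 / 4 * (4 * d ^ 2 * h.det - (d + 1) ^ 2) := by
    rw [det_tmss_add_dsum_zero, det_smul_one_add_fin_two, det_smul, det_smul, det_one, det_sigmaZ,
      Fintype.card_fin]
    linear_combination (d ^ 2 * h.det - d ^ 2 / 4 - 1 / 4) * Real.cosh_sq r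
  have hsinh : 0 < Real.sinh r ^ 2 / 4 := div_pos (pow_pos (Real.sinh_pos_iff.mpr hr) 2) four_pos
  rw [← sub_nonneg, hgap, mul_nonneg_iff_of_pos_left hsinh, sub_nonneg, ge_iff_le]

theorem stmt8 (r : ℝ) (hr : 0 < r) (d : ℝ) (h : Matrix (Fin 2) (Fin 2) ℝ) (hh : h.IsSymm) :
    ((Real.cosh r / 2) • (1 : Matrix (Fin 2) (Fin 2) ℝ)).det +
        d ^ 2 * ((Real.cosh r / 2) • (1 : Matrix (Fin 2) (Fin 2) ℝ) + h).det -
        2 * d * ((Real.sinh r / 2) • sigmaZ).det ≤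
      4 * d ^ 2 * (tmss r + dsum 0 h).det + 1/4
    ↔ 4 * d ^ 2 * h.det ≥ (d + 1) ^ 2 :=
  stmt8_general r hr d h
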